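/- arXiv:2408.06112 — 4 statements merged into one kernel-verified Lean document; each statement's English description precedes it below -/
import Mathlib

section
/- Let X and Y be real-valued random variables with E[Y] = 0 and E[Y^2] < ∞, and let N be a standard normal random variable. Then the Kolmogorov distance satisfies d_K(X + Y, N) ≤ d_K(X, N) + (4/3)·(Var[Y])^{1/3}. -/
/-!
Outside the event `|Y| ≥ ε`, the event `X + Y ≤ t` lies between `X ≤ t - ε` and `X ≤ t + ε`, and
Chebyshev bounds `P(|Y| ≥ ε) ≤ Var Y / ε²`. The standard normal density is at most `1/2`, so moving
the argument of its distribution function by `ε` costs at most `ε/2`. Hence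
`d_K(X + Y, N) ≤ d_K(X, N) + ε/2 + Var Y / ε²` for every `ε > 0`, and `ε = (3/2) (Var Y)^{1/3}`
gives the claim.
-/

open MeasureTheory ProbabilityTheory

/-- Kolmogorov distance between (the laws of) two real random variables. -/
noncomputable def dK {Ω : Type*} [MeasurableSpace Ω] (μ : Measure Ω) (X Y : Ω → ℝ) : ℝ :=
  ⨆ t : ℝ, |(μ {ω | X ω ≤ t}).toReal - (μ {ω | Y ω ≤ t}).toReal|

open Set Real NNReal

lemma gaussianPDFReal_le (m : ℝ) (v : ℝ≥0) (x : ℝ) : gaussianPDFReal m v x ≤ (√(2 * π * v))⁻¹ :=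
  mul_le_of_le_one_right (by positivity) <| exp_le_one_iff.2 <| by
    rw [neg_div]; exact neg_nonpos.2 (by positivity)

lemma gaussianReal_real_Ioc_le (m : ℝ) {v : ℝ≥0} (hv : v ≠ 0) {a b : ℝ} (hab : a ≤ b) :
    (gaussianReal m v).real (Ioc a b) ≤ (√(2 * π * v))⁻¹ * (b - a) := by
  rw [measureReal_def, gaussianReal_apply_eq_integral m hv,
    ENNReal.toReal_ofReal <|
      setIntegral_nonneg measurableSet_Ioc fun x _ ↦ gaussianPDFReal_nonneg m v x]
  calc ∫ x in Ioc a b, gaussianPDFReal m v x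
      ≤ ‖∫ x in Ioc a b, gaussianPDFReal m v x‖ := le_norm_self _
    _ ≤ (√(2 * π * v))⁻¹ * volume.real (Ioc a b) :=
        norm_setIntegral_le_of_norm_le_const_ae' measure_Ioc_lt_top <| ae_of_all _ fun x _ ↦ by
          rw [Real.norm_of_nonneg (gaussianPDFReal_nonneg m v x)]
          exact gaussianPDFReal_le m v x
    _ = (√(2 * π * v))⁻¹ * (b - a) := by rw [Real.volume_real_Ioc_of_le hab]

lemma lipschitzWith_cdf_of_measureReal_Ioc_le {ν : Measure ℝ} [IsProbabilityMeasure ν] {C : ℝ≥0}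
    (h : ∀ a b, a ≤ b → ν.real (Ioc a b) ≤ C * (b - a)) : LipschitzWith C (cdf ν) := by
  refine LipschitzWith.of_le_add_mul C fun x y ↦ ?_
  rcases le_total x y with hxy | hyx
  · have : (0 : ℝ) ≤ C * dist x y := by positivity
    linarith [(cdf ν).mono hxy]
  · have hIoc : ν.real (Ioc y x) = cdf ν x - cdf ν y := by
      have := (cdf ν).measure_Ioc y x
      rw [measure_cdf] at this
      rw [measureReal_def, this, ENNReal.toReal_ofReal (sub_nonneg.2 ((cdf ν).mono hyx))]
    rw [Real.dist_eq, abs_of_nonneg (sub_nonneg.2 hyx)]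
    linarith [h y x hyx]

lemma lipschitzWith_cdf_gaussianReal_zero_one : LipschitzWith 2⁻¹ (cdf (gaussianReal 0 1)) := by
  refine lipschitzWith_cdf_of_measureReal_Ioc_le fun a b hab ↦ ?_
  have hsqrt : (√(2 * π * (1 : ℝ≥0)))⁻¹ ≤ 2⁻¹ := by
    refine inv_anti₀ two_pos ?_
    rw [NNReal.coe_one, mul_one, Real.le_sqrt' two_pos]
    nlinarith [pi_gt_three]
  calc _ ≤ (√(2 * π * (1 : ℝ≥0)))⁻¹ * (b - a) := gaussianReal_real_Ioc_le 0 one_ne_zero hab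
    _ ≤ _ := by
      rw [NNReal.coe_inv, NNReal.coe_ofNat]
      exact mul_le_mul_of_nonneg_right hsqrt (sub_nonneg.2 hab)

section Perturbation

variable {Ω : Type*} [MeasurableSpace Ω] {μ : Measure Ω} [IsFiniteMeasure μ]

lemma abs_sub_le_dK (X Z : Ω → ℝ) (t : ℝ) :
    |μ.real {ω | X ω ≤ t} - μ.real {ω | Z ω ≤ t}| ≤ dK μ X Z := by
  refine le_ciSup (f := fun t ↦ |μ.real {ω | X ω ≤ t} - μ.real {ω | Z ω ≤ t}|)
    ⟨μ.real univ, ?_⟩ t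
  rintro _ ⟨s, rfl⟩
  exact abs_sub_le_of_nonneg_of_le measureReal_nonneg (measureReal_mono (subset_univ _))
    measureReal_nonneg (measureReal_mono (subset_univ _))

lemma measureReal_add_le_le (X Y : Ω → ℝ) (t ε : ℝ) :
    μ.real {ω | X ω + Y ω ≤ t} ≤ μ.real {ω | X ω ≤ t + ε} + μ.real {ω | ε ≤ |Y ω|} := by
  refine (measureReal_mono fun ω (hω : X ω + Y ω ≤ t) ↦ ?_).trans (measureReal_union_le _ _)
  by_contra! h
  simp only [mem_union, mem_ofPred_eq, not_or, not_le] at h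
  linarith [neg_abs_le (Y ω)]

lemma measureReal_le_sub_le (X Y : Ω → ℝ) (t ε : ℝ) :
    μ.real {ω | X ω ≤ t - ε} ≤ μ.real {ω | X ω + Y ω ≤ t} + μ.real {ω | ε ≤ |Y ω|} := by
  refine (measureReal_mono fun ω (hω : X ω ≤ t - ε) ↦ ?_).trans (measureReal_union_le _ _)
  by_contra! h
  simp only [mem_union, mem_ofPred_eq, not_or, not_le] at h
  linarith [le_abs_self (Y ω)]

lemma dK_add_le {X Y Z : Ω → ℝ} {L : ℝ≥0} (hZ : LipschitzWith L fun t ↦ μ.real {ω | Z ω ≤ t})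
    {ε : ℝ} (hε : 0 ≤ ε) :
    dK μ (fun ω ↦ X ω + Y ω) Z ≤ dK μ X Z + L * ε + μ.real {ω | ε ≤ |Y ω|} := by
  have hZε : ∀ t, |μ.real {ω | Z ω ≤ t + ε} - μ.real {ω | Z ω ≤ t}| ≤ L * ε := fun t ↦ by
    simpa [Real.dist_eq, abs_of_nonneg hε] using hZ.dist_le_mul (t + ε) t
  refine ciSup_le fun t ↦ abs_sub_le_iff.2 ⟨?_, ?_⟩
  · have hsplit := measureReal_add_le_le (μ := μ) X Y t ε
    have hdK := abs_sub_le_iff.1 (abs_sub_le_dK (μ := μ) X Z (t + ε))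
    have hshift := abs_sub_le_iff.1 (hZε t)
    change μ.real _ - μ.real _ ≤ _
    linarith [hdK.1, hshift.1]
  · have hsplit := measureReal_le_sub_le (μ := μ) X Y t ε
    have hdK := abs_sub_le_iff.1 (abs_sub_le_dK (μ := μ) X Z (t - ε))
    have hshift := abs_sub_le_iff.1 (hZε (t - ε))
    rw [sub_add_cancel] at hshift
    change μ.real _ - μ.real _ ≤ _
    linarith [hdK.2, hshift.1]

end Perturbation

lemma measureReal_abs_ge_le_variance_div_sq {Ω : Type*} [MeasurableSpace Ω] {μ : Measure Ω}
    [IsFiniteMeasure μ] {Y : Ω → ℝ} (hY2 : MemLp Y 2 μ) (hY0 : μ[Y] = 0) {ε : ℝ} (hε : 0 < ε) :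
    μ.real {ω | ε ≤ |Y ω|} ≤ variance Y μ / ε ^ 2 := by
  have h := meas_ge_le_variance_div_sq hY2 hε
  simp only [hY0, sub_zero] at h
  exact ENNReal.toReal_le_of_le_ofReal (div_nonneg (variance_nonneg Y μ) (sq_nonneg ε)) h

lemma le_add_mul_rpow_of_forall_pos_le {a b V : ℝ} (hV : 0 ≤ V)
    (h : ∀ ε > 0, a ≤ b + 2⁻¹ * ε + V / ε ^ 2) : a ≤ b + 4 / 3 * V ^ (1 / 3 : ℝ) := by
  rcases hV.eq_or_lt with rfl | hV
  · rw [Real.zero_rpow (by norm_num), mul_zero, add_zero]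
    refine le_of_forall_pos_le_add fun δ hδ ↦ ?_
    simpa using h (2 * δ) (by positivity)
  · set c := V ^ (1 / 3 : ℝ)
    have hc : 0 < c := Real.rpow_pos_of_pos hV _
    have hVc : V = c ^ 3 := by
      rw [← Real.rpow_natCast, ← Real.rpow_mul hV.le]; norm_num
    -- `ε = 3c/2` gives `3c/4 + 4c/9 ≤ 4c/3`
    have := h (3 / 2 * c) (by positivity)
    rw [hVc] at this
    calc a ≤ b + 2⁻¹ * (3 / 2 * c) + c ^ 3 / (3 / 2 * c) ^ 2 := this
      _ ≤ b + 4 / 3 * c := by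
        field_simp
        nlinarith

lemma measureReal_le_eq_cdf_map {Ω : Type*} [MeasurableSpace Ω] {μ : Measure Ω} {N : Ω → ℝ}
    [IsProbabilityMeasure (μ.map N)] (t : ℝ) : μ.real {ω | N ω ≤ t} = cdf (μ.map N) t := by
  have hN : AEMeasurable N μ := .of_map_ne_zero (IsProbabilityMeasure.ne_zero _)
  rw [cdf_eq_real, map_measureReal_apply_of_aemeasurable hN measurableSet_Iic]
  rfl

theorem kolmogorov_add_perturbation
    {Ω : Type*} [MeasurableSpace Ω] (μ : Measure Ω) [IsProbabilityMeasure μ]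
    (X Y N : Ω → ℝ)
    (hY0 : ∫ ω, Y ω ∂μ = 0) (hY2 : MemLp Y 2 μ)
    (hN : Measure.map N μ = gaussianReal 0 1) :
    dK μ (fun ω => X ω + Y ω) N ≤ dK μ X N + (4 / 3) * (variance Y μ) ^ ((1 : ℝ) / 3) := by
  have hΦ : LipschitzWith 2⁻¹ fun t ↦ μ.real {ω | N ω ≤ t} := by
    have : IsProbabilityMeasure (μ.map N) := hN ▸ inferInstance
    simpa only [measureReal_le_eq_cdf_map, hN] using lipschitzWith_cdf_gaussianReal_zero_one
  refine le_add_mul_rpow_of_forall_pos_le (variance_nonneg Y μ) fun ε hε ↦ ?_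
  calc dK μ (fun ω ↦ X ω + Y ω) N
      ≤ dK μ X N + (2⁻¹ : ℝ≥0) * ε + μ.real {ω | ε ≤ |Y ω|} := dK_add_le hΦ hε.le
    _ ≤ dK μ X N + 2⁻¹ * ε + variance Y μ / ε ^ 2 := by
      rw [NNReal.coe_inv, NNReal.coe_ofNat]
      gcongr
      exact measureReal_abs_ge_le_variance_div_sq hY2 hY0 hε
end

section
/- Let X and Y be uncorrelated centered real random variables with Var[X] + Var[Y] = 1, Var[X] > 0, and let N be standard normal. Then d_W(X + Y, N) ≤ d_W(X/√Var[X], N) + 2·(Var[Y])^{1/2}. -/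
open MeasureTheory ProbabilityTheory

/-- Wasserstein-type distance: sup over 1-Lipschitz test functions. -/
noncomputable def dW {Ω : Type*} [MeasurableSpace Ω] (μ : Measure Ω) (X Y : Ω → ℝ) : ℝ :=
  ⨆ h : {h : ℝ → ℝ // LipschitzWith 1 h}, |(∫ ω, h.1 (X ω) ∂μ) - ∫ ω, h.1 (Y ω) ∂μ|

/-! Couple `X + Y` with `X / σ`, where `σ = √Var[X]` and `τ = √Var[Y]`. Every 1-Lipschitz test
function moves by at most `E|X + Y - X / σ| ≤ (σ⁻¹ - 1) E|X| + E|Y| ≤ (1 - σ) + τ`, using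
`E|Z| ≤ √Var[Z]` for centred `Z`; and `1 - σ ≤ 1 - σ² = τ² ≤ τ`. -/

-- In `ℝ` an unbounded supremum is `0`, which is why the bound has to hold in both directions.
theorem Real.iSup_le_iSup_add_of_abs_sub_le {ι : Type*} [Nonempty ι] {f g : ι → ℝ} {c : ℝ}
    (h : ∀ i, |f i - g i| ≤ c) : ⨆ i, f i ≤ (⨆ i, g i) + c := by
  have hfg (i : ι) : f i ≤ g i + c := by linarith [le_abs_self (f i - g i), h i]
  by_cases hg : BddAbove (Set.range g)
  · exact ciSup_le fun i => (hfg i).trans (by gcongr; exact le_ciSup hg i)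
  · have hf : ¬BddAbove (Set.range f) := by
      rintro ⟨b, hb⟩
      refine hg ⟨b + c, ?_⟩
      rintro _ ⟨i, rfl⟩
      linarith [neg_abs_le (f i - g i), h i, hb ⟨i, rfl⟩]
    have hc : 0 ≤ c := (abs_nonneg _).trans (h (Classical.arbitrary ι))
    rw [Real.iSup_of_not_bddAbove hf, Real.iSup_of_not_bddAbove hg]
    linarith

section

variable {Ω : Type*} [MeasurableSpace Ω] {μ : Measure Ω}

theorem LipschitzWith.integrable_comp [IsFiniteMeasure μ] {E F : Type*} [NormedAddCommGroup E]
    [NormedAddCommGroup F] {K : NNReal} {h : E → F} (hh : LipschitzWith K h) {Z : Ω → E}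
    (hZ : Integrable Z μ) : Integrable (fun ω => h (Z ω)) μ := by
  refine ((hZ.norm.const_mul K).add (integrable_const ‖h 0‖)).mono'
    (hh.continuous.comp_aestronglyMeasurable hZ.1) (ae_of_all _ fun ω => ?_)
  have := hh.norm_sub_le (Z ω) 0
  rw [sub_zero] at this
  simp only [Pi.add_apply]
  linarith [norm_sub_norm_le (h (Z ω)) (h 0)]

theorem LipschitzWith.abs_integral_comp_sub_le [IsFiniteMeasure μ] {K : NNReal} {h : ℝ → ℝ}
    (hh : LipschitzWith K h) {Z W : Ω → ℝ} (hZ : Integrable Z μ) (hW : Integrable W μ) :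
    |(∫ ω, h (Z ω) ∂μ) - ∫ ω, h (W ω) ∂μ| ≤ K * ∫ ω, |Z ω - W ω| ∂μ := by
  rw [← integral_sub (hh.integrable_comp hZ) (hh.integrable_comp hW), ← integral_const_mul]
  refine (abs_integral_le_integral_abs).trans <| integral_mono
    ((hh.integrable_comp hZ).sub (hh.integrable_comp hW)).abs ((hZ.sub hW).abs.const_mul _)
    fun ω => ?_
  simpa [Real.dist_eq] using hh.dist_le_mul (Z ω) (W ω)

theorem dW_le_dW_add_integral_abs_sub [IsFiniteMeasure μ] {Z W : Ω → ℝ} (hZ : Integrable Z μ)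
    (hW : Integrable W μ) (N : Ω → ℝ) : dW μ Z N ≤ dW μ W N + ∫ ω, |Z ω - W ω| ∂μ := by
  have : Nonempty {h : ℝ → ℝ // LipschitzWith 1 h} := ⟨⟨id, LipschitzWith.id⟩⟩
  refine Real.iSup_le_iSup_add_of_abs_sub_le fun h => ?_
  calc _ ≤ |(∫ ω, h.1 (Z ω) ∂μ) - ∫ ω, h.1 (W ω) ∂μ| :=
        (abs_abs_sub_abs_le_abs_sub _ _).trans_eq (by rw [sub_sub_sub_cancel_right])
    _ ≤ ∫ ω, |Z ω - W ω| ∂μ := by simpa using h.2.abs_integral_comp_sub_le hZ hW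

theorem sq_integral_abs_le_integral_sq [IsProbabilityMeasure μ] {X : Ω → ℝ} (hX : MemLp X 2 μ) :
    (∫ ω, |X ω| ∂μ) ^ 2 ≤ ∫ ω, X ω ^ 2 ∂μ := by
  have hX' : MemLp (fun ω => |X ω|) 2 μ := hX.abs
  have := variance_nonneg (fun ω => |X ω|) μ
  rw [variance_eq_sub hX'] at this
  simpa only [Pi.pow_apply, sq_abs, sub_nonneg] using this

theorem integral_abs_le_sqrt_variance [IsProbabilityMeasure μ] {X : Ω → ℝ} (hX : MemLp X 2 μ)
    (hX0 : ∫ ω, X ω ∂μ = 0) : ∫ ω, |X ω| ∂μ ≤ √(variance X μ) := by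
  rw [variance_of_integral_eq_zero hX.aemeasurable hX0]
  exact Real.le_sqrt_of_sq_le (sq_integral_abs_le_integral_sq hX)

theorem integral_abs_add_sub_div_le [IsFiniteMeasure μ] {X Y : Ω → ℝ} (hX : Integrable X μ)
    (hY : Integrable Y μ) {σ : ℝ} (hσ₀ : 0 < σ) (hσ₁ : σ ≤ 1) :
    ∫ ω, |X ω + Y ω - X ω / σ| ∂μ ≤ (σ⁻¹ - 1) * ∫ ω, |X ω| ∂μ + ∫ ω, |Y ω| ∂μ := by
  have hc : 0 ≤ σ⁻¹ - 1 := sub_nonneg.2 (one_le_inv₀ hσ₀ |>.2 hσ₁)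
  rw [← integral_const_mul, ← integral_add (hX.abs.const_mul _) hY.abs]
  refine integral_mono ((hX.add hY).sub (hX.div_const σ)).abs
    ((hX.abs.const_mul _).add hY.abs) fun ω => ?_
  calc |X ω + Y ω - X ω / σ| = |Y ω - (σ⁻¹ - 1) * X ω| := by ring_nf
    _ ≤ |Y ω| + |(σ⁻¹ - 1) * X ω| := abs_sub _ _
    _ = (σ⁻¹ - 1) * |X ω| + |Y ω| := by rw [abs_mul, abs_of_nonneg hc, add_comm]

theorem integral_abs_add_sub_div_sqrt_variance_le [IsProbabilityMeasure μ] {X Y : Ω → ℝ}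
    (hX2 : MemLp X 2 μ) (hY2 : MemLp Y 2 μ) (hX0 : ∫ ω, X ω ∂μ = 0) (hY0 : ∫ ω, Y ω ∂μ = 0)
    (hvar : variance X μ + variance Y μ = 1) (hXpos : 0 < variance X μ) :
    ∫ ω, |X ω + Y ω - X ω / √(variance X μ)| ∂μ ≤ 2 * √(variance Y μ) := by
  set σ := √(variance X μ)
  set τ := √(variance Y μ)
  have hσ₀ : 0 < σ := Real.sqrt_pos.2 hXpos
  have hτ₀ : 0 ≤ τ := Real.sqrt_nonneg _
  have hστ : σ ^ 2 + τ ^ 2 = 1 := by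
    rwa [Real.sq_sqrt hXpos.le, Real.sq_sqrt (variance_nonneg Y μ)]
  have hσ₁ : σ ≤ 1 := by nlinarith
  calc _ ≤ (σ⁻¹ - 1) * ∫ ω, |X ω| ∂μ + ∫ ω, |Y ω| ∂μ :=
        integral_abs_add_sub_div_le (hX2.integrable one_le_two) (hY2.integrable one_le_two) hσ₀ hσ₁
    _ ≤ (σ⁻¹ - 1) * σ + τ := by
      gcongr
      · exact sub_nonneg.2 (one_le_inv₀ hσ₀ |>.2 hσ₁)
      · exact integral_abs_le_sqrt_variance hX2 hX0
      · exact integral_abs_le_sqrt_variance hY2 hY0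
    _ = 1 - σ + τ := by field_simp
    _ ≤ 2 * τ := by nlinarith

end

theorem wasserstein_uncorrelated_pair_general
    {Ω : Type*} [MeasurableSpace Ω] (μ : Measure Ω) [IsProbabilityMeasure μ]
    (X Y N : Ω → ℝ)
    (hX2 : MemLp X 2 μ) (hY2 : MemLp Y 2 μ)
    (hX0 : ∫ ω, X ω ∂μ = 0) (hY0 : ∫ ω, Y ω ∂μ = 0)
    (hvar : variance X μ + variance Y μ = 1) (hXpos : 0 < variance X μ) :
    dW μ (fun ω => X ω + Y ω) N
      ≤ dW μ (fun ω => X ω / Real.sqrt (variance X μ)) N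
        + 2 * Real.sqrt (variance Y μ) := by
  have hX := hX2.integrable one_le_two
  calc _ ≤ dW μ (fun ω => X ω / √(variance X μ)) N
          + ∫ ω, |X ω + Y ω - X ω / √(variance X μ)| ∂μ :=
        dW_le_dW_add_integral_abs_sub (hX.add (hY2.integrable one_le_two)) (hX.div_const _) N
    _ ≤ _ := by
      gcongr
      exact integral_abs_add_sub_div_sqrt_variance_le hX2 hY2 hX0 hY0 hvar hXpos

theorem wasserstein_uncorrelated_pair
    {Ω : Type*} [MeasurableSpace Ω] (μ : Measure Ω) [IsProbabilityMeasure μ]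
    (X Y N : Ω → ℝ)
    (hX2 : MemLp X 2 μ) (hY2 : MemLp Y 2 μ)
    (hX0 : ∫ ω, X ω ∂μ = 0) (hY0 : ∫ ω, Y ω ∂μ = 0)
    (huncorr : ∫ ω, X ω * Y ω ∂μ = 0)
    (hvar : variance X μ + variance Y μ = 1) (hXpos : 0 < variance X μ)
    (hN : Measure.map N μ = gaussianReal 0 1) :
    dW μ (fun ω => X ω + Y ω) N
      ≤ dW μ (fun ω => X ω / Real.sqrt (variance X μ)) N
        + 2 * Real.sqrt (variance Y μ) :=
  wasserstein_uncorrelated_pair_general μ X Y N hX2 hY2 hX0 hY0 hvar hXpos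
end

section
/- Let X₁ and X₂ be independent centered non-degenerate real random variables with Var[X₁] + Var[X₂] = 1, and let N be standard normal. Then d_K(X₁ + X₂, N) ≤ d_K(X₁/√Var[X₁], N) + d_K(X₂/√Var[X₂], N). -/
/-!
With `νᵢ` the law of `Xᵢ`, the law of `X₁ + X₂` is `ν₁ ∗ ν₂` and, since Gaussians are stable
under convolution, the law of `N` is `γ₁ ∗ γ₂` with `γᵢ = 𝒩(0, Var[Xᵢ])`. Convolving with a
probability measure `ν` does not increase the Kolmogorov distance, because
`(ν ∗ ρ)(-∞, t] = ∫ ρ(-∞, t - x] dν(x)`; the triangle inequality through `ν₁ ∗ γ₂` therefore gives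
`d_K(ν₁ ∗ ν₂, γ₁ ∗ γ₂) ≤ d_K(ν₁, γ₁) + d_K(ν₂, γ₂)`. Finally `d_K` is invariant under the
increasing rescaling `x ↦ x / √Var[Xᵢ]`, which takes `νᵢ` to the law of `Xᵢ / √Var[Xᵢ]` and `γᵢ`
to `𝒩(0, 1)`.
-/

open MeasureTheory ProbabilityTheory

open Set Measure

noncomputable def kolmogorovDist (ν ρ : Measure ℝ) : ℝ :=
  ⨆ t : ℝ, |ν.real (Iic t) - ρ.real (Iic t)|

section KolmogorovDist

variable {ν ρ : Measure ℝ}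

lemma kolmogorovDist_le {D : ℝ} (h : ∀ t, |ν.real (Iic t) - ρ.real (Iic t)| ≤ D) :
    kolmogorovDist ν ρ ≤ D :=
  ciSup_le h

lemma abs_measureReal_Iic_sub_le_kolmogorovDist [IsProbabilityMeasure ν] [IsProbabilityMeasure ρ]
    (t : ℝ) : |ν.real (Iic t) - ρ.real (Iic t)| ≤ kolmogorovDist ν ρ := by
  refine le_ciSup (f := fun t => |ν.real (Iic t) - ρ.real (Iic t)|) ⟨1, ?_⟩ t
  rintro _ ⟨s, rfl⟩
  exact abs_sub_le_of_nonneg_of_le measureReal_nonneg measureReal_le_one measureReal_nonneg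
    measureReal_le_one

lemma kolmogorovDist_map_orderIso (e : ℝ ≃o ℝ) (ν ρ : Measure ℝ) :
    kolmogorovDist (ν.map e) (ρ.map e) = kolmogorovDist ν ρ := by
  simp only [kolmogorovDist, map_measureReal_apply e.monotone.measurable measurableSet_Iic,
    e.preimage_Iic]
  exact e.symm.surjective.iSup_comp fun t => |ν.real (Iic t) - ρ.real (Iic t)|

lemma dK_eq_kolmogorovDist_map {Ω : Type*} [MeasurableSpace Ω] {μ : Measure Ω} {X Y : Ω → ℝ}
    (hX : AEMeasurable X μ) (hY : AEMeasurable Y μ) :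
    dK μ X Y = kolmogorovDist (μ.map X) (μ.map Y) := by
  simp only [kolmogorovDist, map_measureReal_apply_of_aemeasurable hX measurableSet_Iic,
    map_measureReal_apply_of_aemeasurable hY measurableSet_Iic]
  rfl

end KolmogorovDist

section Convolution

lemma conv_Iic (ν ρ : Measure ℝ) [SFinite ρ] (t : ℝ) :
    (ν ∗ ρ) (Iic t) = ∫⁻ x, ρ (Iic (t - x)) ∂ν := by
  have hslice (x : ℝ) : Prod.mk x ⁻¹' ((fun p : ℝ × ℝ => p.1 + p.2) ⁻¹' Iic t) = Iic (t - x) := by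
    ext y; simp [le_sub_iff_add_le']
  rw [Measure.conv, map_apply measurable_add measurableSet_Iic,
    prod_apply (measurable_add measurableSet_Iic)]
  simp_rw [hslice]

lemma conv_measureReal_Iic (ν ρ : Measure ℝ) [IsFiniteMeasure ρ] (t : ℝ) :
    (ν ∗ ρ).real (Iic t) = ∫ x, ρ.real (Iic (t - x)) ∂ν := by
  have hanti : Antitone fun x => ρ (Iic (t - x)) := fun x y hxy =>
    measure_mono (Iic_subset_Iic.2 (by linarith))
  simp only [measureReal_def]
  rw [conv_Iic,
    integral_toReal hanti.measurable.aemeasurable (ae_of_all _ fun x => measure_lt_top _ _)]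

lemma integrable_measureReal_Iic_sub (ν ρ : Measure ℝ) [IsFiniteMeasure ν] [IsFiniteMeasure ρ]
    (t : ℝ) : Integrable (fun x => ρ.real (Iic (t - x))) ν := by
  have hanti : Antitone fun x => ρ.real (Iic (t - x)) := fun x y hxy =>
    measureReal_mono (Iic_subset_Iic.2 (by linarith))
  refine .of_bound hanti.measurable.aestronglyMeasurable (ρ.real univ) (ae_of_all _ fun x => ?_)
  rw [Real.norm_of_nonneg measureReal_nonneg]
  exact measureReal_mono (subset_univ _)

variable (ν ρ ρ' : Measure ℝ) [IsProbabilityMeasure ν] [IsProbabilityMeasure ρ]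
  [IsProbabilityMeasure ρ']

lemma abs_conv_measureReal_Iic_sub_le_kolmogorovDist (t : ℝ) :
    |(ν ∗ ρ).real (Iic t) - (ν ∗ ρ').real (Iic t)| ≤ kolmogorovDist ρ ρ' := by
  rw [conv_measureReal_Iic, conv_measureReal_Iic, ← integral_sub
    (integrable_measureReal_Iic_sub ν ρ t) (integrable_measureReal_Iic_sub ν ρ' t)]
  have hbound (x : ℝ) : ‖ρ.real (Iic (t - x)) - ρ'.real (Iic (t - x))‖ ≤ kolmogorovDist ρ ρ' :=
    abs_measureReal_Iic_sub_le_kolmogorovDist (t - x)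
  simpa using norm_integral_le_of_norm_le_const (μ := ν) (ae_of_all _ hbound)

theorem kolmogorovDist_conv_le (ν₁ ν₂ ρ₁ ρ₂ : Measure ℝ) [IsProbabilityMeasure ν₁]
    [IsProbabilityMeasure ν₂] [IsProbabilityMeasure ρ₁] [IsProbabilityMeasure ρ₂] :
    kolmogorovDist (ν₁ ∗ ν₂) (ρ₁ ∗ ρ₂) ≤ kolmogorovDist ν₁ ρ₁ + kolmogorovDist ν₂ ρ₂ := by
  refine kolmogorovDist_le fun t => ?_
  calc |(ν₁ ∗ ν₂).real (Iic t) - (ρ₁ ∗ ρ₂).real (Iic t)|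
      ≤ |(ν₁ ∗ ν₂).real (Iic t) - (ν₁ ∗ ρ₂).real (Iic t)|
        + |(ρ₂ ∗ ν₁).real (Iic t) - (ρ₂ ∗ ρ₁).real (Iic t)| := by
        rw [conv_comm ρ₂ ν₁, conv_comm ρ₂ ρ₁]
        exact abs_sub_le _ _ _
    _ ≤ kolmogorovDist ν₂ ρ₂ + kolmogorovDist ν₁ ρ₁ :=
        add_le_add (abs_conv_measureReal_Iic_sub_le_kolmogorovDist _ _ _ t)
          (abs_conv_measureReal_Iic_sub_le_kolmogorovDist _ _ _ t)
    _ = kolmogorovDist ν₁ ρ₁ + kolmogorovDist ν₂ ρ₂ := add_comm _ _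

end Convolution

lemma gaussianReal_map_div_sqrt {v : ℝ} (hv : 0 < v) :
    (gaussianReal 0 v.toNNReal).map (· / √v) = gaussianReal 0 1 := by
  rw [gaussianReal_map_div_const, zero_div]
  congr
  ext
  simp [Real.sq_sqrt hv.le, hv.le, hv.ne']

lemma dK_div_sqrt_eq_kolmogorovDist_gaussianReal {Ω : Type*} [MeasurableSpace Ω] {μ : Measure Ω}
    {X N : Ω → ℝ} {v : ℝ} (hv : 0 < v) (hX : AEMeasurable X μ)
    (hN : μ.map N = gaussianReal 0 1) :
    dK μ (fun ω => X ω / √v) N = kolmogorovDist (μ.map X) (gaussianReal 0 v.toNNReal) := by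
  have hσ : 0 < √v := Real.sqrt_pos.2 hv
  have hN' : AEMeasurable N μ := .of_map_ne_zero (hN ▸ IsProbabilityMeasure.ne_zero _)
  have hmap : μ.map (fun ω => X ω / √v) = (μ.map X).map (· / √v) :=
    ((measurable_div_const _).aemeasurable.map_map_of_aemeasurable hX).symm
  rw [dK_eq_kolmogorovDist_map (hX.div_const _) hN', hN, hmap, ← gaussianReal_map_div_sqrt hv]
  exact kolmogorovDist_map_orderIso (OrderIso.divRight₀ √v hσ) _ _

theorem kolmogorov_independent_pair_general
    {Ω : Type*} [MeasurableSpace Ω] (μ : Measure Ω) [IsProbabilityMeasure μ]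
    (X₁ X₂ N : Ω → ℝ)
    (h2a : MemLp X₁ 2 μ) (h2b : MemLp X₂ 2 μ)
    (hindep : IndepFun X₁ X₂ μ)
    (hva : 0 < variance X₁ μ) (hvb : 0 < variance X₂ μ)
    (hvar : variance X₁ μ + variance X₂ μ = 1)
    (hN : Measure.map N μ = gaussianReal 0 1) :
    dK μ (fun ω => X₁ ω + X₂ ω) N
      ≤ dK μ (fun ω => X₁ ω / Real.sqrt (variance X₁ μ)) N
        + dK μ (fun ω => X₂ ω / Real.sqrt (variance X₂ μ)) N := by
  have hX₁ : AEMeasurable X₁ μ := h2a.aemeasurable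
  have hX₂ : AEMeasurable X₂ μ := h2b.aemeasurable
  have := isProbabilityMeasure_map hX₁
  have := isProbabilityMeasure_map hX₂
  have hsum : μ.map (fun ω => X₁ ω + X₂ ω) = μ.map X₁ ∗ μ.map X₂ :=
    hindep.map_add_eq_map_conv_map₀ hX₁ hX₂
  have hN_conv : μ.map N = gaussianReal 0 (variance X₁ μ).toNNReal ∗
      gaussianReal 0 (variance X₂ μ).toNNReal := by
    rw [hN, gaussianReal_conv_gaussianReal, add_zero, ← Real.toNNReal_add hva.le hvb.le, hvar,
      Real.toNNReal_one]
  have hN' : AEMeasurable N μ := .of_map_ne_zero (hN ▸ IsProbabilityMeasure.ne_zero _)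
  rw [dK_eq_kolmogorovDist_map (X := fun ω => X₁ ω + X₂ ω) (hX₁.add hX₂) hN',
    hsum, hN_conv, dK_div_sqrt_eq_kolmogorovDist_gaussianReal hva hX₁ hN,
    dK_div_sqrt_eq_kolmogorovDist_gaussianReal hvb hX₂ hN]
  exact kolmogorovDist_conv_le _ _ _ _

theorem kolmogorov_independent_pair
    {Ω : Type*} [MeasurableSpace Ω] (μ : Measure Ω) [IsProbabilityMeasure μ]
    (X₁ X₂ N : Ω → ℝ)
    (h2a : MemLp X₁ 2 μ) (h2b : MemLp X₂ 2 μ)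
    (hindep : IndepFun X₁ X₂ μ)
    (h0a : ∫ ω, X₁ ω ∂μ = 0) (h0b : ∫ ω, X₂ ω ∂μ = 0)
    (hva : 0 < variance X₁ μ) (hvb : 0 < variance X₂ μ)
    (hvar : variance X₁ μ + variance X₂ μ = 1)
    (hN : Measure.map N μ = gaussianReal 0 1) :
    dK μ (fun ω => X₁ ω + X₂ ω) N
      ≤ dK μ (fun ω => X₁ ω / Real.sqrt (variance X₁ μ)) N
        + dK μ (fun ω => X₂ ω / Real.sqrt (variance X₂ μ)) N :=
  kolmogorov_independent_pair_general μ X₁ X₂ N h2a h2b hindep hva hvb hvar hN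
end

section
/- Let Y_{i_k} = ∏_{e ∈ E(H_{i_k})} X_e − p^{e_H} be centered occurrence indicators of hypergraphs H_{i_1},…,H_{i_r} (each with e_H edges) in a homogeneous random hypergraph where every edge exists independently with probability p. Then |E[Y_{i_1} ⋯ Y_{i_r}]| ≤ 2·e_H^r·(1−p), for all p ∈ (0,1). -/
open MeasureTheory ProbabilityTheory Finset

theorem centered_indicator_product_bound
    {Ω E : Type*} [MeasurableSpace Ω] (μ : Measure Ω) [IsProbabilityMeasure μ]
    (p : ℝ) (hp : p ∈ Set.Ioo (0 : ℝ) 1)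
    (X : E → Ω → ℝ)
    (hindep : iIndepFun X μ)
    (hmeas : ∀ e, Measurable (X e))
    (h1 : ∀ e, μ {ω | X e ω = 1} = ENNReal.ofReal p)
    (h0 : ∀ e, μ {ω | X e ω = 0} = ENNReal.ofReal (1 - p))
    (r : ℕ) (hr : 1 ≤ r) (eH : ℕ)
    (S : Fin r → Finset E) (hcard : ∀ k, (S k).card = eH) :
    |∫ ω, ∏ k, ((∏ e ∈ S k, X e ω) - p ^ eH) ∂μ| ≤ 2 * (eH : ℝ) ^ r * (1 - p) := by
  obtain ⟨hp0, hp1⟩ := hp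
  have hp1' : (0:ℝ) ≤ 1 - p := by linarith
  have hpow0 : (0:ℝ) ≤ p ^ eH := pow_nonneg hp0.le _
  have hpow1 : p ^ eH ≤ 1 := pow_le_one₀ hp0.le hp1.le
  -- trivial case eH = 0
  rcases Nat.eq_zero_or_pos eH with heH | heH
  · have hS : ∀ k, S k = ∅ := fun k => Finset.card_eq_zero.mp (by rw [hcard k, heH])
    have : ∀ ω : Ω, ∏ k, ((∏ e ∈ S k, X e ω) - p ^ eH) = 0 := by
      intro ω
      have : Nonempty (Fin r) := Fin.pos_iff_nonempty.mp hr
      simp [hS, heH]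
      omega
    have hint : ∫ ω, ∏ k, ((∏ e ∈ S k, X e ω) - p ^ eH) ∂μ = 0 := by
      simp only [this, integral_zero]
    rw [hint, abs_zero, heH, Nat.cast_zero, zero_pow (by omega : r ≠ 0)]
    norm_num
  have heH1 : (1:ℝ) ≤ (eH:ℝ) := by exact_mod_cast heH
  set i0 : Fin r := ⟨0, hr⟩
  set B : Set Ω := ⋃ e ∈ (S i0 : Set E), {ω | X e ω = 0} with hB
  have hBmeas : MeasurableSet B := by
    apply MeasurableSet.biUnion (S i0).countable_toSet
    intro e _
    exact (hmeas e) (measurableSet_singleton 0)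
  set g : Ω → ℝ := fun ω => (1 - p ^ eH) + B.indicator (fun _ => (1:ℝ)) ω with hg
  -- a.e., each X e takes values in {0,1}
  have hae : ∀ᵐ ω ∂μ, ∀ k : Fin r, ∀ e ∈ S k, X e ω = 0 ∨ X e ω = 1 := by
    rw [ae_all_iff]
    intro k
    have key : ∀ e ∈ (S k : Set E), ∀ᵐ ω ∂μ, X e ω = 0 ∨ X e ω = 1 := by
      intro e _
      have hd : Disjoint {ω | X e ω = 0} {ω | X e ω = 1} := by
        rw [Set.disjoint_left]
        intro ω h0' h1'
        simp only [Set.mem_setOf_eq] at h0' h1'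
        rw [h0'] at h1'; norm_num at h1'
      have hu : μ ({ω | X e ω = 0} ∪ {ω | X e ω = 1}) = 1 := by
        rw [measure_union hd ((hmeas e) (measurableSet_singleton 1)), h0 e, h1 e,
          ← ENNReal.ofReal_add hp1' hp0.le]
        norm_num
      have := prob_compl_eq_zero_iff
        (((hmeas e) (measurableSet_singleton (0:ℝ))).union
          ((hmeas e) (measurableSet_singleton (1:ℝ)))) |>.mpr hu
      filter_upwards [measure_eq_zero_iff_ae_notMem.mp this] with ω hω
      have hmem := not_not.mp (by simpa using hω)
      tauto
    have h2 := (ae_ball_iff (S k).countable_toSet).mpr key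
    filter_upwards [h2] with ω hω e he
    exact hω e (by exact_mod_cast he)
  -- pointwise bound
  have hbound : ∀ᵐ ω ∂μ, |∏ k, ((∏ e ∈ S k, X e ω) - p ^ eH)| ≤ g ω := by
    filter_upwards [hae] with ω hω
    have hZ : ∀ k : Fin r, (∏ e ∈ S k, X e ω) = 0 ∨ (∏ e ∈ S k, X e ω) = 1 := by
      intro k
      by_cases h : ∃ e ∈ S k, X e ω = 0
      · obtain ⟨e, he, h0'⟩ := h
        exact Or.inl (Finset.prod_eq_zero he h0')
      · push_neg at h
        refine Or.inr (Finset.prod_eq_one fun e he => ?_)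
        rcases hω k e he with h' | h'
        · exact absurd h' (h e he)
        · exact h'
    have habs : ∀ k : Fin r, |(∏ e ∈ S k, X e ω) - p ^ eH| ≤ 1 := by
      intro k
      rcases hZ k with h | h <;> rw [h] <;> rw [abs_le] <;> constructor <;> linarith
    rw [abs_prod]
    calc ∏ k, |(∏ e ∈ S k, X e ω) - p ^ eH|
        = |(∏ e ∈ S i0, X e ω) - p ^ eH| *
          ∏ k ∈ Finset.univ.erase i0, |(∏ e ∈ S k, X e ω) - p ^ eH| :=
          (Finset.mul_prod_erase _ _ (mem_univ i0)).symm
      _ ≤ |(∏ e ∈ S i0, X e ω) - p ^ eH| * 1 := by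
          apply mul_le_mul_of_nonneg_left _ (abs_nonneg _)
          exact Finset.prod_le_one (fun k _ => abs_nonneg _) (fun k _ => habs k)
      _ = |(∏ e ∈ S i0, X e ω) - p ^ eH| := mul_one _
      _ ≤ g ω := by
          by_cases hmem : ω ∈ B
          · simp only [hg, Set.indicator_of_mem hmem]
            have := habs i0
            linarith
          · have hall : ∀ e ∈ S i0, X e ω = 1 := by
              intro e he
              rcases hω i0 e he with h' | h'
              · exact absurd (Set.mem_biUnion he h') hmem
              · exact h'
            rw [Finset.prod_eq_one hall]
            simp only [hg, Set.indicator_of_notMem hmem, add_zero]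
            rw [abs_of_nonneg (by linarith)]
    -- done
  -- integrability of g
  have hgint : Integrable g μ := by
    apply (integrable_const _).add
    rw [integrable_indicator_iff hBmeas]
    exact (integrableOn_const_iff (C := (1:ℝ))).mpr (Or.inr (measure_lt_top μ B))
  -- value of ∫ g
  have hBval : (μ B).toReal ≤ (eH:ℝ) * (1 - p) := by
    have hle : μ B ≤ ∑ e ∈ S i0, μ {ω | X e ω = 0} := measure_biUnion_finset_le _ _
    rw [Finset.sum_congr rfl (fun e _ => h0 e), Finset.sum_const, hcard i0] at hle
    have hle2 : μ B ≤ ENNReal.ofReal ((eH:ℝ) * (1 - p)) := by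
      refine hle.trans_eq ?_
      rw [nsmul_eq_mul, ENNReal.ofReal_mul (by positivity), ENNReal.ofReal_natCast]
    exact ENNReal.toReal_le_of_le_ofReal (by positivity) hle2
  have hgeom : 1 - p ^ eH ≤ (eH:ℝ) * (1 - p) := by
    have h1 : (1:ℝ) - p ^ eH = (∑ i ∈ Finset.range eH, p ^ i) * (1 - p) := by
      have := geom_sum_mul p eH
      nlinarith [this]
    rw [h1]
    apply mul_le_mul_of_nonneg_right _ hp1'
    calc (∑ i ∈ Finset.range eH, p ^ i) ≤ ∑ i ∈ Finset.range eH, 1 :=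
          Finset.sum_le_sum (fun i _ => pow_le_one₀ hp0.le hp1.le)
      _ = (eH:ℝ) := by simp
  have hgval : ∫ ω, g ω ∂μ ≤ 2 * (eH:ℝ) * (1 - p) := by
    rw [hg, integral_add (integrable_const _)
      ((integrable_indicator_iff hBmeas).mpr ((integrableOn_const_iff (C := (1:ℝ))).mpr (Or.inr (measure_lt_top μ B))))]
    rw [integral_const, integral_indicator_const _ hBmeas]
    simp only [measureReal_def, measure_univ, ENNReal.toReal_one, one_smul, smul_eq_mul, mul_one]
    linarith
  calc |∫ ω, ∏ k, ((∏ e ∈ S k, X e ω) - p ^ eH) ∂μ|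
      ≤ ∫ ω, |∏ k, ((∏ e ∈ S k, X e ω) - p ^ eH)| ∂μ := by
        simp only [← Real.norm_eq_abs]
        exact norm_integral_le_integral_norm _
    _ ≤ ∫ ω, g ω ∂μ := integral_mono_of_nonneg (ae_of_all _ fun ω => abs_nonneg _) hgint hbound
    _ ≤ 2 * (eH:ℝ) * (1 - p) := hgval
    _ ≤ 2 * (eH:ℝ) ^ r * (1 - p) := by
        have : (eH:ℝ) ≤ (eH:ℝ) ^ r := le_self_pow₀ heH1 (by omega)
        nlinarith
end
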